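/- Suppose x ∈ (0,1/2) is nonsingular. Then p is constant on some open neighborhood of x if and only if S₊(x) = 0 or S₋(x) = 0. Moreover, if S₊(x) = 0 the constant value of p near x is (Λ/q)·|S₋(x)|², and if S₋(x) = 0 it is (Λ/q)·|S₊(x)|². -/

import Mathlib

noncomputable def e (x : ℝ) : ℂ := Complex.exp (2 * Real.pi * Complex.I * x)

noncomputable def G (a k : ℤ) (q : ℕ) : ℂ :=
  ∑ ℓ ∈ Finset.range q, e (((a * ℓ ^ 2 + k * ℓ : ℤ) : ℝ) / q)

noncomputable def invMod (a : ℤ) (q : ℕ) : ℕ := ZMod.val ((a : ZMod q)⁻¹)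

noncomputable def cc (a : ℤ) (q : ℕ) (k : ℤ) : ℂ :=
  if Odd q then e ((invMod (4 * a) q : ℝ) * (k : ℝ) ^ 2 / q)
  else if Even (k + (q : ℤ) / 2) then
    (Real.sqrt 2 : ℂ) * e ((invMod a q : ℝ) * (k : ℝ) ^ 2 / (4 * q))
  else 0

noncomputable def Iset (Λ : ℝ) (q : ℕ) (x : ℝ) : Finset ℤ :=
  Finset.Icc ⌈x * q - q / (2 * Λ)⌉ ⌊x * q + q / (2 * Λ)⌋

noncomputable def pden (N q : ℕ) (Λ : ℝ) (a : ℤ) (x : ℝ) : ℝ :=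
  (4 * Λ / q) * (‖(∑ k ∈ Iset Λ q x,
    cc a q k * (Real.sin (2 * Real.pi * N * Λ * (x - k / q)) : ℂ))‖) ^ 2

noncomputable def Splus (N q : ℕ) (Λ : ℝ) (a : ℤ) (x : ℝ) : ℂ :=
  ∑ k ∈ Iset Λ q x, cc a q k * e (N * Λ * k / q)

noncomputable def Sminus (N q : ℕ) (Λ : ℝ) (a : ℤ) (x : ℝ) : ℂ :=
  ∑ k ∈ Iset Λ q x, cc a q k * e (-(N * Λ * k / q))

def Nonsingular (Λ : ℝ) (q : ℕ) (x : ℝ) : Prop :=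
  (Odd q → ∀ n : ℤ, x * q - q / (2 * Λ) ≠ n ∧ x * q + q / (2 * Λ) ≠ n) ∧
  (Even q → ∀ n : ℤ, Even n →
    x * q - q / (2 * Λ) + q / 2 ≠ n ∧ x * q + q / (2 * Λ) + q / 2 ≠ n)

noncomputable def Dnear (x : ℝ) : ℝ := |x - round x|

/-!
Near a nonsingular point `x` no integer `k` with `c_{a/q}(k) ≠ 0` enters or leaves `I(y)`, so
the sum defining `p(y)` runs over the fixed set `I(x)`. Expanding the sines into exponentials
with `u = NΛy` gives `p(y) = (Λ/q)‖e(u) S₋ - e(-u) S₊‖² = (Λ/q)(|S₋|² + |S₊|² - 2 Re(e(2u) w))`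
with `w = S₋ · conj S₊`. Such a function is constant near `x` only if `w = 0`: comparing the
values at `x ± t` isolates `(cos 2πt - 1) Re w'` and `sin 2πt · Im w'` for a unimodular
multiple `w'` of `w`.
-/

open Filter Topology

lemma e_eq_exp (t : ℝ) : e t = Complex.exp ((2 * Real.pi * t : ℝ) * Complex.I) := by
  rw [e]; push_cast; ring_nf

lemma e_add (s t : ℝ) : e (s + t) = e s * e t := by
  simp only [e_eq_exp, ← Complex.exp_add]; push_cast; ring_nf

lemma e_ne_zero (t : ℝ) : e t ≠ 0 := Complex.exp_ne_zero _

lemma norm_e (t : ℝ) : ‖e t‖ = 1 := by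
  rw [e_eq_exp]; exact Complex.norm_exp_ofReal_mul_I _

lemma conj_e (t : ℝ) : starRingEnd ℂ (e t) = e (-t) := by
  rw [e_eq_exp, e_eq_exp, ← Complex.exp_conj, map_mul, Complex.conj_ofReal, Complex.conj_I]
  push_cast; ring_nf

lemma re_e_mul (t : ℝ) (w : ℂ) :
    (e t * w).re = Real.cos (2 * Real.pi * t) * w.re - Real.sin (2 * Real.pi * t) * w.im := by
  rw [e_eq_exp, Complex.mul_re, Complex.exp_ofReal_mul_I_re, Complex.exp_ofReal_mul_I_im]

lemma ofReal_sin_eq_e (t : ℝ) :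
    (Real.sin (2 * Real.pi * t) : ℂ) = (e t - e (-t)) / (2 * Complex.I) := by
  rw [e_eq_exp, e_eq_exp, Complex.ofReal_sin, Complex.sin]
  push_cast
  field_simp
  ring_nf
  rw [Complex.I_sq]
  ring

lemma norm_e_mul_sub_e_neg_mul_sq (u : ℝ) (M P : ℂ) :
    ‖e u * M - e (-u) * P‖ ^ 2
      = ‖M‖ ^ 2 + ‖P‖ ^ 2 - 2 * (e (2 * u) * (M * starRingEnd ℂ P)).re := by
  rw [Complex.sq_norm, Complex.normSq_sub, Complex.normSq_mul, Complex.normSq_mul]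
  simp only [← Complex.sq_norm, norm_e, one_pow, one_mul, map_mul, conj_e, neg_neg]
  rw [two_mul u, e_add, mul_mul_mul_comm]

lemma eq_zero_of_eventually_re_e_mul_eq {v : ℂ}
    (h : ∀ᶠ t in 𝓝 (0 : ℝ), (e t * v).re = v.re) : v = 0 := by
  have hsymm : ∀ᶠ t in 𝓝 (0 : ℝ), (e t * v).re = v.re ∧ (e (-t) * v).re = v.re :=
    h.and ((continuous_neg.tendsto' 0 0 neg_zero).eventually h)
  obtain ⟨t, ⟨hpos, hneg⟩, ht0, ht1⟩ :=
    ((hsymm.filter_mono nhdsWithin_le_nhds).and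
      (Ioo_mem_nhdsGT (show (0 : ℝ) < 1 / 2 by norm_num))).exists
  have hθ0 : 0 < 2 * Real.pi * t := by positivity
  have hθπ : 2 * Real.pi * t < Real.pi := by nlinarith [Real.pi_pos]
  have hsin : 0 < Real.sin (2 * Real.pi * t) := Real.sin_pos_of_pos_of_lt_pi hθ0 hθπ
  have hcos : Real.cos (2 * Real.pi * t) < 1 := by
    simpa using Real.cos_lt_cos_of_nonneg_of_le_pi le_rfl hθπ.le hθ0
  rw [re_e_mul] at hpos hneg
  rw [mul_neg, Real.cos_neg, Real.sin_neg] at hneg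
  have him : Real.sin (2 * Real.pi * t) * v.im = 0 := by linarith
  have hre : (Real.cos (2 * Real.pi * t) - 1) * v.re = 0 := by linear_combination (hpos + hneg) / 2
  exact Complex.ext ((mul_eq_zero.mp hre).resolve_left (sub_ne_zero.mpr hcos.ne))
    ((mul_eq_zero.mp him).resolve_left hsin.ne')

lemma eq_zero_of_eventually_re_e_mul_eq_of_ne_zero {c x : ℝ} (hc : c ≠ 0) {w : ℂ}
    (h : ∀ᶠ y in 𝓝 x, (e (c * y) * w).re = (e (c * x) * w).re) : w = 0 := by
  have hlim : Tendsto (fun t => x + t / c) (𝓝 0) (𝓝 x) :=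
    (by fun_prop : Continuous fun t : ℝ => x + t / c).tendsto' 0 x (by simp)
  have hshift : ∀ᶠ t in 𝓝 (0 : ℝ), (e t * (e (c * x) * w)).re = (e (c * x) * w).re := by
    filter_upwards [hlim.eventually h] with t ht
    rwa [← mul_assoc, ← e_add, show t + c * x = c * (x + t / c) by field_simp; ring]
  simpa [e_ne_zero] using eq_zero_of_eventually_re_e_mul_eq hshift

lemma eventually_forall_intCast_le_iff (E : ℝ) :
    ∀ᶠ y in 𝓝 E, ∀ k : ℤ, (k : ℝ) ≠ E → (((k : ℝ) ≤ y ↔ (k : ℝ) ≤ E) ∧ (y ≤ k ↔ E ≤ k)) := by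
  have hceil : (⌈E⌉ : ℝ) - 1 < E := by linarith [Int.ceil_lt_add_one E]
  filter_upwards [Ioo_mem_nhds hceil (Int.lt_floor_add_one E)] with y ⟨hy₁, hy₂⟩ k hk
  rcases hk.lt_or_gt with hlt | hgt
  · have : (k : ℝ) ≤ ⌈E⌉ - 1 := by exact_mod_cast Int.le_sub_one_of_lt (Int.lt_ceil.mpr hlt)
    constructor <;> constructor <;> intro <;> linarith
  · have : (⌊E⌋ : ℝ) + 1 ≤ k := by exact_mod_cast Int.add_one_le_of_lt (Int.floor_lt.mpr hgt)
    constructor <;> constructor <;> intro <;> linarith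

lemma mem_Iset {Λ : ℝ} {q : ℕ} {x : ℝ} {k : ℤ} :
    k ∈ Iset Λ q x ↔ x * q - q / (2 * Λ) ≤ k ∧ (k : ℝ) ≤ x * q + q / (2 * Λ) := by
  rw [Iset, Finset.mem_Icc, Int.ceil_le, Int.le_floor]

lemma intCast_ne_endpoints_of_cc_ne_zero {Λ : ℝ} {q : ℕ} {x : ℝ} {a k : ℤ}
    (hns : Nonsingular Λ q x) (hk : cc a q k ≠ 0) :
    (k : ℝ) ≠ x * q - q / (2 * Λ) ∧ (k : ℝ) ≠ x * q + q / (2 * Λ) := by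
  rcases Nat.even_or_odd q with hev | hodd
  · have hpar : Even (k + (q : ℤ) / 2) := by
      by_contra hpar
      exact hk (by simp [cc, Nat.not_odd_iff_even.mpr hev, hpar])
    have hhalf : (((q : ℤ) / 2 : ℤ) : ℝ) = (q : ℝ) / 2 := by
      obtain ⟨m, rfl⟩ := hev
      rw [show ((m + m : ℕ) : ℤ) / 2 = m by omega]
      push_cast; ring
    have hend := hns.2 hev _ hpar
    push_cast [hhalf] at hend
    exact ⟨fun h => hend.1 (by rw [h]), fun h => hend.2 (by rw [h])⟩
  · exact ⟨(hns.1 hodd k).1.symm, (hns.1 hodd k).2.symm⟩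

lemma eventually_mem_Iset_iff_of_nonsingular {Λ : ℝ} {q : ℕ} {x : ℝ} (a : ℤ)
    (hns : Nonsingular Λ q x) :
    ∀ᶠ y in 𝓝 x, ∀ k : ℤ, cc a q k ≠ 0 → (k ∈ Iset Λ q y ↔ k ∈ Iset Λ q x) := by
  have hL : Tendsto (fun y : ℝ => y * q - q / (2 * Λ)) (𝓝 x) (𝓝 (x * q - q / (2 * Λ))) :=
    ((continuous_mul_const _).sub continuous_const).tendsto x
  have hR : Tendsto (fun y : ℝ => y * q + q / (2 * Λ)) (𝓝 x) (𝓝 (x * q + q / (2 * Λ))) :=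
    ((continuous_mul_const _).add continuous_const).tendsto x
  filter_upwards [hL.eventually (eventually_forall_intCast_le_iff _),
    hR.eventually (eventually_forall_intCast_le_iff _)] with y hyL hyR k hk
  obtain ⟨hkL, hkR⟩ := intCast_ne_endpoints_of_cc_ne_zero hns hk
  rw [mem_Iset, mem_Iset, (hyL k hkL).2, (hyR k hkR).1]

lemma Finset.sum_eq_sum_of_mem_iff_of_ne_zero {ι M : Type*} [AddCommMonoid M]
    {s t : Finset ι} {f : ι → M} (h : ∀ i, f i ≠ 0 → (i ∈ s ↔ i ∈ t)) :
    ∑ i ∈ s, f i = ∑ i ∈ t, f i := by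
  classical
  rw [← Finset.sum_filter_ne_zero s, ← Finset.sum_filter_ne_zero t]
  congr 1
  ext i
  simp only [Finset.mem_filter]
  exact and_congr_left (h i)

lemma sum_mul_sin_eq (N q : ℕ) (Λ : ℝ) (c : ℤ → ℂ) (T : Finset ℤ) (y : ℝ) :
    ∑ k ∈ T, c k * (Real.sin (2 * Real.pi * N * Λ * (y - k / q)) : ℂ)
      = (e (N * Λ * y) * ∑ k ∈ T, c k * e (-(N * Λ * k / q))
          - e (-(N * Λ * y)) * ∑ k ∈ T, c k * e (N * Λ * k / q)) / (2 * Complex.I) := by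
  rw [Finset.mul_sum, Finset.mul_sum, ← Finset.sum_sub_distrib, Finset.sum_div]
  refine Finset.sum_congr rfl fun k _ => ?_
  rw [show 2 * Real.pi * N * Λ * (y - k / q) = 2 * Real.pi * (N * Λ * y + -(N * Λ * k / q)) by
    ring, ofReal_sin_eq_e, e_add, neg_add, e_add, neg_neg]
  ring

lemma eventually_pden_eq (N q : ℕ) (Λ : ℝ) (a : ℤ) {x : ℝ} (hns : Nonsingular Λ q x) :
    ∀ᶠ y in 𝓝 x, pden N q Λ a y = Λ / q *
      ‖e (N * Λ * y) * Sminus N q Λ a x - e (-(N * Λ * y)) * Splus N q Λ a x‖ ^ 2 := by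
  filter_upwards [eventually_mem_Iset_iff_of_nonsingular a hns] with y hy
  rw [pden, Finset.sum_eq_sum_of_mem_iff_of_ne_zero fun k hk => hy k (left_ne_zero_of_mul hk),
    sum_mul_sin_eq, norm_div, div_pow, Splus, Sminus]
  simp only [norm_mul, Complex.norm_ofNat, Complex.norm_I]
  ring

lemma eventually_nhds_iff_abs {p : ℝ → Prop} {x : ℝ} :
    (∀ᶠ y in 𝓝 x, p y) ↔ ∃ ε > 0, ∀ y, |y - x| < ε → p y := by
  simp only [Metric.eventually_nhds_iff, Real.dist_eq]

theorem stmt5_general (Λ : ℝ) (hΛ : 1 < Λ) (N : ℕ) (hN : 0 < N) (a : ℤ) (q : ℕ)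
    (hq : 0 < q) (x : ℝ) (hns : Nonsingular Λ q x) :
    ((∃ ε > (0 : ℝ), ∀ y : ℝ, |y - x| < ε → pden N q Λ a y = pden N q Λ a x) ↔
      (Splus N q Λ a x = 0 ∨ Sminus N q Λ a x = 0)) ∧
    (Splus N q Λ a x = 0 → ∃ ε > (0 : ℝ), ∀ y : ℝ, |y - x| < ε →
      pden N q Λ a y = (Λ / q) * (‖Sminus N q Λ a x‖) ^ 2) ∧
    (Sminus N q Λ a x = 0 → ∃ ε > (0 : ℝ), ∀ y : ℝ, |y - x| < ε →
      pden N q Λ a y = (Λ / q) * (‖Splus N q Λ a x‖) ^ 2) := by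
  simp only [← eventually_nhds_iff_abs]
  have hpden := eventually_pden_eq N q Λ a hns
  set P := Splus N q Λ a x
  set M := Sminus N q Λ a x
  have hP : P = 0 → ∀ᶠ y in 𝓝 x, pden N q Λ a y = Λ / q * ‖M‖ ^ 2 := fun h =>
    hpden.mono fun y hy => by simp [hy, h, norm_e]
  have hM : M = 0 → ∀ᶠ y in 𝓝 x, pden N q Λ a y = Λ / q * ‖P‖ ^ 2 := fun h =>
    hpden.mono fun y hy => by simp [hy, h, norm_e]
  refine ⟨⟨fun hconst => ?_, ?_⟩, hP, hM⟩
  · have hΛq : Λ / q ≠ 0 := by positivity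
    have hc : 2 * ((N : ℝ) * Λ) ≠ 0 := by positivity
    have hw : M * starRingEnd ℂ P = 0 := by
      refine eq_zero_of_eventually_re_e_mul_eq_of_ne_zero (x := x) hc ?_
      filter_upwards [hconst, hpden] with y hy hyM
      rw [hyM, hpden.self_of_nhds, norm_e_mul_sub_e_neg_mul_sq,
        norm_e_mul_sub_e_neg_mul_sq] at hy
      simp only [mul_assoc] at hy ⊢
      linarith [mul_left_cancel₀ hΛq hy]
    simpa [or_comm] using hw
  · rintro (h | h)
    · filter_upwards [hP h] with y hy using hy.trans (hP h).self_of_nhds.symm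
    · filter_upwards [hM h] with y hy using hy.trans (hM h).self_of_nhds.symm

theorem stmt5 (Λ : ℝ) (hΛ : 1 < Λ) (N : ℕ) (hN : 0 < N) (a : ℤ) (q : ℕ)
    (hq : 0 < q) (hcop : Int.gcd a q = 1) (x : ℝ) (hx : x ∈ Set.Ioo (0 : ℝ) (1 / 2))
    (hns : Nonsingular Λ q x) :
    ((∃ ε > (0 : ℝ), ∀ y : ℝ, |y - x| < ε → pden N q Λ a y = pden N q Λ a x) ↔
      (Splus N q Λ a x = 0 ∨ Sminus N q Λ a x = 0)) ∧
    (Splus N q Λ a x = 0 → ∃ ε > (0 : ℝ), ∀ y : ℝ, |y - x| < ε →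
      pden N q Λ a y = (Λ / q) * (‖Sminus N q Λ a x‖) ^ 2) ∧
    (Sminus N q Λ a x = 0 → ∃ ε > (0 : ℝ), ∀ y : ℝ, |y - x| < ε →
      pden N q Λ a y = (Λ / q) * (‖Splus N q Λ a x‖) ^ 2) :=
  stmt5_general Λ hΛ N hN a q hq x hns
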